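/- Let M be a divisibility monoid and let a, b be elements of M admitting local deltas. Then a ∨ b exists and admits a local delta, and Δ_R(a ∨ b) = Δ_R(a) ∨ Δ_R(b). -/

import Mathlib

/-- `LDvd b a` : `b` left-divides `a`, i.e. `a = b * d` for some `d`. -/
def LDvd {M : Type*} [Monoid M] (b a : M) : Prop := ∃ d, a = b * d

/-- `c` is a right lcm of `a` and `b`. -/
def IsRightLcm {M : Type*} [Monoid M] (a b c : M) : Prop :=
  LDvd a c ∧ LDvd b c ∧ ∀ m, LDvd a m → LDvd b m → LDvd c m

/-- `1` is the only invertible element. -/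
def Conical (M : Type*) [Monoid M] : Prop := ∀ u : M, IsUnit u → u = 1

/-- Left and right cancellativity. -/
def Cancellative (M : Type*) [Monoid M] : Prop :=
  (∀ a b c : M, a * b = a * c → b = c) ∧ (∀ a b c : M, b * a = c * a → b = c)

/-- `IsRes a b r` : `r` is the residue `a \ b`, i.e. `a * r` is the right lcm `a ∨ b`. -/
def IsRes {M : Type*} [Monoid M] (a b r : M) : Prop := IsRightLcm a b (a * r)

/-- The set of irreducible elements of `M`. -/
def Irr (M : Type*) [Monoid M] : Set M :=
  {a | a ≠ 1 ∧ ∀ b c : M, a = b * c → b = 1 ∨ c = 1}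

/-- `a` is quasi-central: `aΣ = Σa` where `Σ` is the set of irreducible elements. -/
def QuasiCentral {M : Type*} [Monoid M] (a : M) : Prop :=
  (fun x => a * x) '' Irr M = (fun x => x * a) '' Irr M

/-- `g` is a left gcd of `a` and `b`. -/
def IsLeftGcd {M : Type*} [Monoid M] (a b g : M) : Prop :=
  LDvd g a ∧ LDvd g b ∧ ∀ d, LDvd d a → LDvd d b → LDvd d g

/-- `j` is the join of `x` and `y` inside the lattice `↓(a)` of left divisors of `a`. -/
def IsJoinIn {M : Type*} [Monoid M] (a x y j : M) : Prop :=
  LDvd j a ∧ LDvd x j ∧ LDvd y j ∧ ∀ m, LDvd m a → LDvd x m → LDvd y m → LDvd j m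

/-- A (left) divisibility monoid : cancellative, finitely generated by its irreducible
elements, any two elements admit a left gcd, and every `↓(a)` is a finite distributive
lattice under left divisibility (meets are left gcds, joins exist, distributivity holds). -/
structure IsDivisibilityMonoid (M : Type*) [Monoid M] : Prop where
  mul_left_cancel : ∀ a b c : M, a * b = a * c → b = c
  mul_right_cancel : ∀ a b c : M, b * a = c * a → b = c
  irr_finite : (Irr M).Finite
  irr_gen : ∀ a : M, a ∈ Submonoid.closure (Irr M)
  exists_gcd : ∀ a b : M, ∃ g, IsLeftGcd a b g
  divisors_finite : ∀ a : M, {b : M | LDvd b a}.Finite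
  exists_join : ∀ a x y : M, LDvd x a → LDvd y a → ∃ j, IsJoinIn a x y j
  distrib : ∀ a x y z : M, LDvd x a → LDvd y a → LDvd z a →
    ∀ jyz g gxy gxz j', IsJoinIn a y z jyz → IsLeftGcd x jyz g →
      IsLeftGcd x y gxy → IsLeftGcd x z gxz → IsJoinIn a gxy gxz j' → g = j'

/-- `d` is the (right) local delta of `a`: the right lcm of the set `{b \ a : b ∈ M}`,
all of whose elements are required to exist. -/
def IsLocalDelta {M : Type*} [Monoid M] (a d : M) : Prop :=
  (∀ b : M, ∃ r, IsRes b a r) ∧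
  (∀ b r : M, IsRes b a r → LDvd r d) ∧
  ∀ m : M, (∀ b r : M, IsRes b a r → LDvd r m) → LDvd d m

/-!
Everything rests on the universal property of residues in a left-cancellative monoid:
`c \ a` left-divides `m` iff `a` left-divides `c * m`. With it, `c \ (a ∨ b)` is the lcm of
`c \ a` and `c \ b`, so the residues of `a ∨ b` have the same upper bounds as the residues of
`a` and `b` together, whose lcm is `Δ_R(a) ∨ Δ_R(b)`.

The one real difficulty is that `Δ_R(a) ∨ Δ_R(b)` exists at all; it does because `Δ_R(a)` has
residues (`c ∨ Δ_R(a)` exists for every `c`). Every residue `c \ a` has residues, since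
`e \ (c \ a) = (c * e) \ a`; the lcm of two elements with residues has residues, since
`e ∨ (x ∨ y) = (e ∨ x) ∨ y`; and in a divisibility monoid `a` has only finitely many residues,
all of them left divisors of `Δ_R(a)`. So `Δ_R(a)` is the lcm of finitely many elements with
residues.
-/

section LeftDivisibility

variable {M : Type*} [Monoid M] {a b c j m : M}

theorem LDvd.trans : LDvd a b → LDvd b c → LDvd a c
  | ⟨d, hd⟩, ⟨e, he⟩ => ⟨d * e, by rw [he, hd, mul_assoc]⟩

theorem ldvd_mul_right (a b : M) : LDvd a (a * b) := ⟨b, rfl⟩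

theorem one_ldvd (a : M) : LDvd 1 a := ⟨a, (one_mul a).symm⟩

theorem LDvd.mul_left (h : LDvd a b) (c : M) : LDvd (c * a) (c * b) := by
  obtain ⟨d, rfl⟩ := h
  exact ⟨d, (mul_assoc c a d).symm⟩

theorem LDvd.of_mul_left [IsLeftCancelMul M] (h : LDvd (c * a) (c * b)) : LDvd a b := by
  obtain ⟨d, hd⟩ := h
  exact ⟨d, mul_left_cancel (hd.trans (mul_assoc c a d))⟩

theorem IsRightLcm.symm (h : IsRightLcm a b c) : IsRightLcm b a c :=
  ⟨h.2.1, h.1, fun m hb ha => h.2.2 m ha hb⟩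

theorem IsRightLcm.congr_right {b' : M} (h : IsRightLcm a b c) (h₁ : LDvd b b')
    (h₂ : LDvd b' b) : IsRightLcm a b' c :=
  ⟨h.1, h₂.trans h.2.1, fun m ha hb' => h.2.2 m ha (h₁.trans hb')⟩

theorem IsRightLcm.assoc {L T : M} (h₁ : IsRightLcm c a L) (h₂ : IsRightLcm L b T)
    (hj : IsRightLcm a b j) : IsRightLcm c j T :=
  ⟨h₁.1.trans h₂.1, hj.2.2 T (h₁.2.1.trans h₂.1) h₂.2.1,
    fun m hc hjm => h₂.2.2 m (h₁.2.2 m hc (hj.1.trans hjm)) (hj.2.1.trans hjm)⟩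

theorem IsRes.ldvd_iff [IsLeftCancelMul M] {r : M} (h : IsRes c a r) :
    LDvd r m ↔ LDvd a (c * m) :=
  ⟨fun hr => h.2.1.trans (hr.mul_left c),
    fun ha => (h.2.2 _ (ldvd_mul_right c m) ha).of_mul_left⟩

end LeftDivisibility

section Residues

variable {M : Type*} [Monoid M] {a b d j : M} {S : Set M}

def HasResidues (a : M) : Prop := ∀ c : M, ∃ r, IsRes c a r

def residues (a : M) : Set M := {r | ∃ c, IsRes c a r}

def IsRightLcmOf (S : Set M) (d : M) : Prop :=
  (∀ s ∈ S, LDvd s d) ∧ ∀ m, (∀ s ∈ S, LDvd s m) → LDvd d m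

theorem hasResidues_one : HasResidues (1 : M) :=
  fun c => ⟨1, ⟨ldvd_mul_right c 1, one_ldvd _, fun m hc _ => by rwa [mul_one]⟩⟩

theorem HasResidues.of_ldvd_of_ldvd (h : HasResidues a) (h₁ : LDvd a b) (h₂ : LDvd b a) :
    HasResidues b :=
  fun c => (h c).imp fun _ hr => hr.congr_right h₁ h₂

theorem HasResidues.of_isRightLcm (ha : HasResidues a) (hb : HasResidues b)
    (hj : IsRightLcm a b j) : HasResidues j := by
  intro c
  obtain ⟨r, hr⟩ := ha c
  obtain ⟨s, hs⟩ := hb (c * r)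
  have h := hr.assoc hs hj
  rw [mul_assoc] at h
  exact ⟨r * s, h⟩

theorem exists_isRightLcmOf_hasResidues (hS : S.Finite) (h : ∀ s ∈ S, HasResidues s) :
    ∃ d, IsRightLcmOf S d ∧ HasResidues d := by
  induction S, hS using Set.Finite.induction_on with
  | empty => exact ⟨1, ⟨by simp, fun m _ => one_ldvd m⟩, hasResidues_one⟩
  | @insert x S _ _ ih =>
    obtain ⟨d, hd, hdres⟩ := ih fun s hs => h s (.inr hs)
    have hx := h x (.inl rfl)
    obtain ⟨r, hr⟩ := hx d
    refine ⟨d * r, ⟨?_, fun m hm => ?_⟩, hdres.of_isRightLcm hx hr⟩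
    · rintro s (rfl | hs)
      exacts [hr.2.1, (hd.1 s hs).trans hr.1]
    · exact hr.2.2 m (hd.2 m fun s hs => hm s (.inr hs)) (hm x (.inl rfl))

theorem IsRightLcmOf.hasResidues (hd : IsRightLcmOf S d) (hS : S.Finite)
    (h : ∀ s ∈ S, HasResidues s) : HasResidues d := by
  obtain ⟨d', hd', hres⟩ := exists_isRightLcmOf_hasResidues hS h
  exact hres.of_ldvd_of_ldvd (hd'.2 d hd.1) (hd.2 d' hd'.1)

theorem HasResidues.of_mem_residues [IsLeftCancelMul M] {s : M} (ha : HasResidues a)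
    (hs : s ∈ residues a) : HasResidues s := by
  obtain ⟨c₁, hs⟩ := hs
  intro c
  obtain ⟨v, hv⟩ := ha (c₁ * c)
  refine ⟨v, ldvd_mul_right c v, hs.ldvd_iff.2 (mul_assoc c₁ c v ▸ hv.2.1), ?_⟩
  rintro m ⟨m', rfl⟩ hsm
  exact (hv.ldvd_iff.2 (mul_assoc c₁ c m' ▸ hs.ldvd_iff.1 hsm)).mul_left c

theorem IsLocalDelta.isRightLcmOf (h : IsLocalDelta a d) :
    IsRightLcmOf (residues a) d :=
  ⟨fun _ ⟨c, hc⟩ => h.2.1 c _ hc, fun m hm => h.2.2 m fun c r hr => hm r ⟨c, hr⟩⟩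

theorem IsLocalDelta.hasResidues_delta [IsLeftCancelMul M] (h : IsLocalDelta a d)
    (hfin : {b : M | LDvd b d}.Finite) : HasResidues d :=
  h.isRightLcmOf.hasResidues (hfin.subset h.isRightLcmOf.1)
    fun _ hs => HasResidues.of_mem_residues h.1 hs

theorem IsLocalDelta.isRightLcm [IsLeftCancelMul M] {da db dj : M} (hda : IsLocalDelta a da)
    (hdb : IsLocalDelta b db) (hj : IsRightLcm a b j) (hdj : IsRightLcm da db dj) :
    IsLocalDelta j dj := by
  have hjres : HasResidues j := HasResidues.of_isRightLcm hda.1 hdb.1 hj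
  refine ⟨hjres, fun c r hr => ?_, fun m hm => ?_⟩
  · obtain ⟨ra, hra⟩ := hda.1 c
    obtain ⟨rb, hrb⟩ := hdb.1 c
    refine hr.ldvd_iff.2 (hj.2.2 _ ?_ ?_)
    exacts [hra.ldvd_iff.1 ((hda.2.1 c ra hra).trans hdj.1),
      hrb.ldvd_iff.1 ((hdb.2.1 c rb hrb).trans hdj.2.1)]
  · have hjm : ∀ c, LDvd j (c * m) := fun c => by
      obtain ⟨r, hr⟩ := hjres c
      exact hr.ldvd_iff.1 (hm c r hr)
    exact hdj.2.2 m (hda.2.2 m fun c _ hra => hra.ldvd_iff.2 (hj.1.trans (hjm c)))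
      (hdb.2.2 m fun c _ hrb => hrb.ldvd_iff.2 (hj.2.1.trans (hjm c)))

end Residues

theorem stmt18 {M : Type*} [Monoid M] (hM : IsDivisibilityMonoid M)
    (a b da db : M) (hda : IsLocalDelta a da) (hdb : IsLocalDelta b db) :
    ∃ j dj : M, IsRightLcm a b j ∧ IsLocalDelta j dj ∧ IsRightLcm da db dj := by
  have : IsLeftCancelMul M := ⟨fun a _ _ h => hM.mul_left_cancel a _ _ h⟩
  obtain ⟨r, hr⟩ := hda.1 b
  obtain ⟨s, hs⟩ := hda.hasResidues_delta (hM.divisors_finite da) db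
  exact ⟨b * r, db * s, hr.symm, hda.isRightLcm hdb hr.symm hs.symm, hs.symm⟩
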